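/- arXiv:2404.02771 — 6 statements merged into one kernel-verified Lean document; each statement's English description precedes it below -/
import Mathlib

section
/- Let a ∈ ℝ², let d ∈ ℝ² be a unit vector, let φ ∈ (0, π/3] and Δ ∈ (0, 1]. Then the diameter of the drawing hull H(a,d,φ,Δ) (i.e., the supremum of distances between pairs of its points) equals Δ. -/
/-!
Every point of the hull lies within `Δ` of the anchor `a`, and two points of the sector part
subtend an angle less than `φ ≤ π/3` at `a`. Since `cos ≥ 1/2` there, the law of cosines gives
`|u - v|² ≤ |u|² + |v|² - |u||v| ≤ Δ²`. The bound `Δ` is attained by `a` and `a + Δd`.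
-/

open Real Set

/-- Map an angle in `(-π, π]` (as returned by `Complex.arg`) to `[0, 2π)`. -/
noncomputable def toCCW (θ : ℝ) : ℝ := if 0 ≤ θ then θ else θ + 2 * Real.pi

/-- The counterclockwise angle from `w` to `z` (as vectors in `ℝ² = ℂ`), in `[0, 2π)`. -/
noncomputable def ccwAngle (w z : ℂ) : ℝ := toCCW ((z / w).arg)

/-- The drawing hull `H(a, d, φ, Δ)`: all points within distance `Δ` of the anchor `a`
whose counterclockwise angle (measured from direction `d`) lies in `[0, φ)`,
together with the anchor itself. -/
noncomputable def dhull (a d : ℂ) (φ Δ : ℝ) : Set ℂ :=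
  {a} ∪ {x : ℂ | dist x a ≤ Δ ∧ ccwAngle d (x - a) ∈ Set.Ico 0 φ}

theorem Complex.norm_sub_sq_eq_cos_arg_sub (u v : ℂ) :
    ‖u - v‖ ^ 2 = ‖u‖ ^ 2 + ‖v‖ ^ 2 - 2 * ‖u‖ * ‖v‖ * Real.cos (u.arg - v.arg) := by
  have hu_re := Complex.norm_mul_cos_arg u
  have hu_im := Complex.norm_mul_sin_arg u
  have hv_re := Complex.norm_mul_cos_arg v
  have hv_im := Complex.norm_mul_sin_arg v
  simp only [Complex.sq_norm, Complex.normSq_apply, Complex.sub_re, Complex.sub_im, Real.cos_sub]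
  linear_combination 2 * (‖v‖ * Real.cos v.arg) * hu_re + 2 * u.re * hv_re
    + 2 * (‖v‖ * Real.sin v.arg) * hu_im + 2 * u.im * hv_im

theorem Complex.norm_sub_le_of_abs_arg_sub_le {u v : ℂ} {r : ℝ} (hu : ‖u‖ ≤ r) (hv : ‖v‖ ≤ r)
    (huv : |u.arg - v.arg| ≤ π / 3) : ‖u - v‖ ≤ r := by
  have hcos : 1 / 2 ≤ Real.cos (u.arg - v.arg) := by
    rw [← Real.cos_abs, ← Real.cos_pi_div_three]
    exact Real.cos_le_cos_of_nonneg_of_le_pi (abs_nonneg _) (by linarith [pi_pos]) huv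
  have hr : 0 ≤ r := (norm_nonneg u).trans hu
  have hsq : ‖u - v‖ ^ 2 ≤ r ^ 2 := by
    rw [Complex.norm_sub_sq_eq_cos_arg_sub]
    nlinarith [mul_nonneg (norm_nonneg u) (norm_nonneg v),
      mul_nonneg (sub_nonneg.2 hu) (sub_nonneg.2 hv),
      mul_nonneg (norm_nonneg u) (sub_nonneg.2 hu), mul_nonneg (norm_nonneg v) (sub_nonneg.2 hv)]
  exact (pow_le_pow_iff_left₀ (norm_nonneg _) hr two_ne_zero).1 hsq

theorem arg_div_mem_Ico_of_ccwAngle_mem_Ico {w z : ℂ} {φ : ℝ} (hφ : φ ≤ π)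
    (h : ccwAngle w z ∈ Ico 0 φ) : (z / w).arg ∈ Ico 0 φ := by
  unfold ccwAngle toCCW at h
  split_ifs at h with h0
  · exact h
  · linarith [h.2, Complex.neg_pi_lt_arg (z / w)]

section dhull

variable {a d x y : ℂ} {φ Δ : ℝ}

theorem self_mem_dhull : a ∈ dhull a d φ Δ := Or.inl rfl

theorem add_mul_mem_dhull (hd : ‖d‖ = 1) (hφ : 0 < φ) (hΔ : 0 ≤ Δ) :
    a + Δ * d ∈ dhull a d φ Δ := by
  have hd0 : d ≠ 0 := norm_ne_zero_iff.1 (hd ▸ one_ne_zero)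
  refine Or.inr ⟨?_, ?_⟩
  · simp [dist_eq_norm, hd, abs_of_nonneg hΔ]
  · simp [ccwAngle, toCCW, hd0, Complex.arg_ofReal_of_nonneg hΔ, hφ]

theorem dhull_subset_closedBall (hΔ : 0 ≤ Δ) : dhull a d φ Δ ⊆ Metric.closedBall a Δ := by
  rintro x (rfl | hx)
  · exact Metric.mem_closedBall_self hΔ
  · exact hx.1

theorem dist_le_of_mem_dhull (hd : ‖d‖ = 1) (hφ : φ ≤ π / 3) (hΔ : 0 ≤ Δ)
    (hx : x ∈ dhull a d φ Δ) (hy : y ∈ dhull a d φ Δ) : dist x y ≤ Δ := by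
  rcases hx with rfl | ⟨hxa, hxφ⟩
  · exact dist_comm x y ▸ dhull_subset_closedBall hΔ hy
  rcases hy with rfl | ⟨hya, hyφ⟩
  · exact hxa
  have hα := arg_div_mem_Ico_of_ccwAngle_mem_Ico (by linarith [pi_pos]) hxφ
  have hβ := arg_div_mem_Ico_of_ccwAngle_mem_Ico (by linarith [pi_pos]) hyφ
  have hdist : dist x y = ‖(x - a) / d - (y - a) / d‖ := by
    rw [← sub_div, sub_sub_sub_cancel_right, norm_div, hd, div_one, dist_eq_norm]
  rw [hdist]
  refine Complex.norm_sub_le_of_abs_arg_sub_le ?_ ?_ (abs_le.2 ⟨?_, ?_⟩)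
  · rwa [norm_div, hd, div_one, ← dist_eq_norm]
  · rwa [norm_div, hd, div_one, ← dist_eq_norm]
  · linarith [hα.1, hβ.2]
  · linarith [hα.2, hβ.1]

end dhull

/-- For an anchor `a`, a unit direction `d`, a span `φ ∈ (0, π/3]` and a
diameter parameter `Δ ∈ (0, 1]`, the metric diameter of the drawing hull `H(a, d, φ, Δ)`
equals `Δ`. -/
theorem drawing_hull_diam (a d : ℂ) (hd : ‖d‖ = 1) (φ Δ : ℝ)
    (hφ : φ ∈ Set.Ioc 0 (π / 3)) (hΔ : Δ ∈ Set.Ioc (0 : ℝ) 1) :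
    Metric.diam (dhull a d φ Δ) = Δ := by
  obtain ⟨hφ0, hφπ⟩ := hφ
  have hΔ0 : 0 ≤ Δ := hΔ.1.le
  have hbdd : Bornology.IsBounded (dhull a d φ Δ) :=
    Metric.isBounded_closedBall.subset (dhull_subset_closedBall hΔ0)
  refine le_antisymm (Metric.diam_le_of_forall_dist_le hΔ0
    fun x hx y hy ↦ dist_le_of_mem_dhull hd hφπ hΔ0 hx hy) ?_
  calc Δ = dist (a + Δ * d) a := by simp [dist_eq_norm, hd, abs_of_nonneg hΔ0]
    _ ≤ Metric.diam (dhull a d φ Δ) :=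
      Metric.dist_le_diam_of_mem hbdd (add_mul_mem_dhull hd hφ0 hΔ0) self_mem_dhull
end

section
/- Let a ∈ ℝ², let d ∈ ℝ² be a unit vector, let φ ∈ (0, π/3], Δ ∈ (0, 1], and let ε satisfy 0 < ε ≤ Δ. Then the number of ε-granular states of size 3, i.e. |A^3(ε)|, equals ⌊(Δ/ε − 1)/2⌋. -/
open Real Set

/-- The `ε`-granular locations `L(ε)` of a drawing hull: the anchor together with the
nonnegative `2ε`-grid with origin `a + ε•d`, `x`-axis direction `d` (and `y`-axis
direction `d` rotated counterclockwise by `π/2`, i.e. `I * d`), intersected with the hull. -/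
noncomputable def dlocs (a d : ℂ) (φ Δ ε : ℝ) : Set ℂ :=
  ({a} ∪ {x : ℂ | ∃ i j : ℕ,
      x = a + ((1 + 2 * (i : ℝ)) * ε) • d + (2 * (j : ℝ) * ε) • (Complex.I * d)})
    ∩ dhull a d φ Δ

/-- The defining triples `T(ε)`: `{a, a + ε•d, a + (1+2i)ε•d}` for `i ≥ 1` with `(1+2i)ε ≤ Δ`. -/
noncomputable def dtriples (a d : ℂ) (Δ ε : ℝ) : Set (Set ℂ) :=
  {T : Set ℂ | ∃ i : ℕ, 1 ≤ i ∧ (1 + 2 * (i : ℝ)) * ε ≤ Δ ∧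
    T = {a, a + ε • d, a + ((1 + 2 * (i : ℝ)) * ε) • d}}

/-- The `ε`-granular states `A(ε) = {S ∪ T : S ⊆ L(ε), T ∈ T(ε)}`. -/
noncomputable def dstates (a d : ℂ) (φ Δ ε : ℝ) : Set (Set ℂ) :=
  {U : Set ℂ | ∃ S ⊆ dlocs a d φ Δ ε, ∃ T ∈ dtriples a d Δ ε, U = S ∪ T}

/-- The `ε`-granular states of size `ℓ`, `A^ℓ(ε)`. -/
noncomputable def dstatesOfSize (a d : ℂ) (φ Δ ε : ℝ) (ℓ : ℕ) : Set (Set ℂ) :=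
  {U ∈ dstates a d φ Δ ε | U.ncard = ℓ}

/-- For `0 < ε ≤ Δ`, the number of `ε`-granular states of size `3` equals
`⌊(Δ/ε - 1)/2⌋`. -/
theorem card_states_three (a d : ℂ) (hd : ‖d‖ = 1) (φ Δ ε : ℝ)
    (hφ : φ ∈ Set.Ioc 0 (π / 3)) (hΔ : Δ ∈ Set.Ioc (0 : ℝ) 1)
    (hε : 0 < ε) (hεΔ : ε ≤ Δ) :
    (dstatesOfSize a d φ Δ ε 3).ncard = ⌊(Δ / ε - 1) / 2⌋₊ := by
  obtain ⟨hφ0, hφ3⟩ := hφ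
  obtain ⟨hΔ0, hΔ1⟩ := hΔ
  have hd0 : d ≠ 0 := by intro h; simp [h] at hd
  have hcancel : ∀ c c' : ℝ, c • d = c' • d → c = c' := by
    intro c c' h
    have h2 : (c - c') • d = 0 := by rw [sub_smul, h, sub_self]
    rcases smul_eq_zero.mp h2 with h3 | h3
    · linarith [sub_eq_zero.mp (by exact_mod_cast h3)]
    · exact absurd h3 hd0
  have key : ∀ i : ℕ, 1 ≤ i →
      ({a, a + ε • d, a + ((1 + 2 * (i:ℝ)) * ε) • d} : Set ℂ).ncard = 3 := by
    intro i hi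
    have h1 : a ≠ a + ε • d := by
      intro h
      have : (0:ℝ) • d = ε • d := by
        rw [zero_smul]; simpa using congrArg (fun x => x - a) h
      linarith [hcancel 0 ε this]
    have h2 : a ≠ a + ((1 + 2 * (i:ℝ)) * ε) • d := by
      intro h
      have : (0:ℝ) • d = ((1 + 2 * (i:ℝ)) * ε) • d := by
        rw [zero_smul]
        simpa using congrArg (fun x => x - a) h
      have := hcancel 0 _ this
      have hi' : (1:ℝ) ≤ (i:ℝ) := by exact_mod_cast hi
      nlinarith
    have h3 : a + ε • d ≠ a + ((1 + 2 * (i:ℝ)) * ε) • d := by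
      intro h
      have : ε • d = ((1 + 2 * (i:ℝ)) * ε) • d := by
        simpa using congrArg (fun x => x - a) h
      have := hcancel ε _ this
      have hi' : (1:ℝ) ≤ (i:ℝ) := by exact_mod_cast hi
      nlinarith
    rw [Set.ncard_insert_of_notMem
        (by simp only [Set.mem_insert_iff, Set.mem_singleton_iff]; push_neg; exact ⟨h1, h2⟩)
        ((Set.finite_singleton _).insert _),
      Set.ncard_pair h3]
  have hset : dstatesOfSize a d φ Δ ε 3 = dtriples a d Δ ε := by
    ext U
    constructor
    · rintro ⟨⟨S, hS, T, hT, rfl⟩, hcard⟩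
      obtain ⟨i, hi1, hi2, rfl⟩ := hT
      have hfin : (S ∪ ({a, a + ε • d, a + ((1 + 2 * (i:ℝ)) * ε) • d} : Set ℂ)).Finite := by
        apply Set.finite_of_ncard_ne_zero
        rw [hcard]; omega
      have heq : ({a, a + ε • d, a + ((1 + 2 * (i:ℝ)) * ε) • d} : Set ℂ) =
          S ∪ {a, a + ε • d, a + ((1 + 2 * (i:ℝ)) * ε) • d} :=
        Set.eq_of_subset_of_ncard_le Set.subset_union_right
          (by rw [hcard, key i hi1]) hfin
      rw [← heq]
      exact ⟨i, hi1, hi2, rfl⟩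
    · rintro ⟨i, hi1, hi2, rfl⟩
      exact ⟨⟨∅, Set.empty_subset _, _, ⟨i, hi1, hi2, rfl⟩, (Set.empty_union _).symm⟩,
        key i hi1⟩
  rw [hset]
  set N := ⌊(Δ / ε - 1) / 2⌋₊ with hN
  have h0 : (0:ℝ) ≤ (Δ / ε - 1) / 2 := by
    have : (1:ℝ) ≤ Δ / ε := (one_le_div hε).mpr hεΔ
    linarith
  have hiff : ∀ i : ℕ, ((1 + 2 * (i:ℝ)) * ε ≤ Δ) ↔ i ≤ N := by
    intro i
    rw [hN, Nat.le_floor_iff h0]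
    constructor
    · intro h
      have h2 : (1 + 2 * (i:ℝ)) ≤ Δ / ε := (le_div_iff₀ hε).mpr (by linarith)
      linarith
    · intro h
      have h2 : (1 + 2 * (i:ℝ)) ≤ Δ / ε := by linarith
      calc (1 + 2 * (i:ℝ)) * ε ≤ (Δ / ε) * ε := by
            apply mul_le_mul_of_nonneg_right h2 hε.le
        _ = Δ := by field_simp
  have himg : dtriples a d Δ ε =
      (fun i : ℕ => ({a, a + ε • d, a + ((1 + 2 * (i:ℝ)) * ε) • d} : Set ℂ)) ''
        ↑(Finset.Icc 1 N) := by
    ext T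
    constructor
    · rintro ⟨i, hi1, hi2, rfl⟩
      exact ⟨i, by simp [Finset.mem_Icc, hi1, (hiff i).mp hi2], rfl⟩
    · rintro ⟨i, hi, rfl⟩
      simp only [Finset.coe_Icc, Set.mem_Icc] at hi
      exact ⟨i, hi.1, (hiff i).mpr hi.2, rfl⟩
  have hinj : Set.InjOn
      (fun i : ℕ => ({a, a + ε • d, a + ((1 + 2 * (i:ℝ)) * ε) • d} : Set ℂ))
      ↑(Finset.Icc 1 N) := by
    intro i hi j hj h
    simp only at h
    simp only [Finset.coe_Icc, Set.mem_Icc] at hi hj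
    have hi1 : (1:ℝ) ≤ (i:ℝ) := by exact_mod_cast hi.1
    have hj1 : (1:ℝ) ≤ (j:ℝ) := by exact_mod_cast hj.1
    have hmem : a + ((1 + 2 * (i:ℝ)) * ε) • d ∈
        ({a, a + ε • d, a + ((1 + 2 * (j:ℝ)) * ε) • d} : Set ℂ) := by
      rw [← h]; simp
    rcases hmem with h1 | h1 | h1
    · exfalso
      have : ((1 + 2 * (i:ℝ)) * ε) • d = (0:ℝ) • d := by
        rw [zero_smul]; simpa using congrArg (fun x => x - a) h1
      have := hcancel _ 0 this
      nlinarith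
    · exfalso
      have : ((1 + 2 * (i:ℝ)) * ε) • d = ε • d := by
        simpa using congrArg (fun x => x - a) h1
      have := hcancel _ ε this
      nlinarith
    · have : ((1 + 2 * (i:ℝ)) * ε) • d = ((1 + 2 * (j:ℝ)) * ε) • d := by
        simpa using congrArg (fun x => x - a) h1
      have heq := hcancel _ _ this
      have : (i:ℝ) = (j:ℝ) := by nlinarith
      exact_mod_cast this
  rw [himg, Set.ncard_image_of_injOn hinj, Set.ncard_coe_finset, Nat.card_Icc]
  omega
end

section
/- Let a ∈ ℝ², let d ∈ ℝ² be a unit vector, let φ ∈ (0, π/3], Δ ∈ (0, 1], and let ε satisfy 0 < ε and 3ε ≤ Δ. Set k := |L(ε)|. Then for every integer ℓ with 4 ≤ ℓ ≤ k − 1, the number of ε-granular states of size ℓ satisfies |A^ℓ(ε)| ≥ C(k−3, ℓ−3) ≥ k − 3, where C(·,·) denotes the binomial coefficient. -/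
open Real Set

/-!
Fix one defining triple `T = {a, a + ε•d, a + 3ε•d}`, which exists because `3ε ≤ Δ` and lies on
the axis of the hull, hence inside `L(ε)`. Adding `T` to the `(ℓ - 3)`-subsets of `L(ε) \ T` gives
pairwise distinct states of size `ℓ`, so there are at least `C(k - 3, ℓ - 3)` of them; and
`C(n, r) ≥ n` whenever `0 < r < n`.
-/

theorem Nat.self_le_choose : ∀ {n r : ℕ}, 0 < r → r < n → n ≤ n.choose r
  | m + 1, s + 1, _, hr => by
    rw [Nat.choose_succ_succ']
    rcases Nat.eq_zero_or_pos s with rfl | hs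
    · simp [Nat.add_comm]
    · have ih : m ≤ m.choose s := Nat.self_le_choose hs (by omega)
      have hpos : 0 < m.choose (s + 1) := Nat.choose_pos (by omega)
      omega

theorem Set.choose_le_ncard_of_union_mem {α : Type*} {L T : Set α} {𝒜 : Set (Set α)}
    (hL : L.Finite) (hTL : T ⊆ L) (h𝒜 : 𝒜.Finite) (r : ℕ)
    (hmem : ∀ S ⊆ L \ T, S.ncard = r → S ∪ T ∈ 𝒜) :
    (L.ncard - T.ncard).choose r ≤ 𝒜.ncard := by
  rw [← ncard_sdiff' hTL hL, ← ncard_powerset_ncard (hL.sdiff) r]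
  refine ncard_le_ncard_of_injOn (· ∪ T) (fun S hS => hmem S hS.1 hS.2) ?_ h𝒜
  have hcancel : ∀ S ⊆ L \ T, (S ∪ T) \ T = S := fun S hS =>
    union_sdiff_right.trans ((subset_sdiff.mp hS).2.sdiff_eq_left)
  intro S hS S' hS' h
  rw [← hcancel S hS.1, ← hcancel S' hS'.1]
  exact congrArg (· \ T) h

section DrawingHull

variable {a d : ℂ} {φ Δ ε : ℝ}

theorem ccwAngle_smul_self (hd : d ≠ 0) {c : ℝ} (hc : 0 ≤ c) : ccwAngle d (c • d) = 0 := by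
  rw [ccwAngle, Complex.real_smul, mul_div_assoc, div_self hd, mul_one,
    Complex.arg_ofReal_of_nonneg hc, toCCW, if_pos le_rfl]

theorem add_smul_mem_dhull (hd : ‖d‖ = 1) (hφ : 0 < φ) {c : ℝ} (hc : 0 ≤ c) (hcΔ : c ≤ Δ) :
    a + c • d ∈ dhull a d φ Δ := by
  have hd0 : d ≠ 0 := norm_ne_zero_iff.mp (hd ▸ one_ne_zero)
  refine Or.inr ⟨?_, ?_⟩
  · rwa [dist_eq_norm, add_sub_cancel_left, norm_smul, hd, mul_one, norm_of_nonneg hc]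
  · rw [add_sub_cancel_left, ccwAngle_smul_self hd0 hc]
    exact ⟨le_rfl, hφ⟩

theorem anchor_mem_dlocs : a ∈ dlocs a d φ Δ ε :=
  ⟨Or.inl rfl, Or.inl rfl⟩

theorem axis_mem_dlocs (hd : ‖d‖ = 1) (hφ : 0 < φ) (hε : 0 ≤ ε) {i : ℕ}
    (hi : (1 + 2 * (i : ℝ)) * ε ≤ Δ) : a + ((1 + 2 * (i : ℝ)) * ε) • d ∈ dlocs a d φ Δ ε :=
  ⟨Or.inr ⟨i, 0, by simp⟩, add_smul_mem_dhull hd hφ (by positivity) hi⟩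

theorem subset_dlocs_of_mem_dtriples (hd : ‖d‖ = 1) (hφ : 0 < φ) (hε : 0 ≤ ε) {T : Set ℂ}
    (hT : T ∈ dtriples a d Δ ε) : T ⊆ dlocs a d φ Δ ε := by
  obtain ⟨i, -, hiΔ, rfl⟩ := hT
  have hεΔ : ε ≤ Δ := le_trans (by nlinarith [(i.cast_nonneg : (0 : ℝ) ≤ i)]) hiΔ
  have h₁ : a + ε • d ∈ dlocs a d φ Δ ε := by
    simpa using axis_mem_dlocs (a := a) (i := 0) hd hφ hε (by simpa using hεΔ)
  rintro x (rfl | rfl | rfl)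
  exacts [anchor_mem_dlocs, h₁, axis_mem_dlocs hd hφ hε hiΔ]

theorem dstates_subset_powerset_dlocs (hd : ‖d‖ = 1) (hφ : 0 < φ) (hε : 0 ≤ ε) :
    dstates a d φ Δ ε ⊆ 𝒫 dlocs a d φ Δ ε := by
  rintro _ ⟨S, hS, T, hT, rfl⟩
  exact union_subset hS (subset_dlocs_of_mem_dtriples hd hφ hε hT)

theorem triple_mem_dtriples (hεΔ : 3 * ε ≤ Δ) :
    {a, a + ε • d, a + (3 * ε) • d} ∈ dtriples a d Δ ε :=
  ⟨1, le_rfl, by norm_num [hεΔ], by norm_num⟩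

theorem ncard_triple (hd : d ≠ 0) (hε : ε ≠ 0) :
    ({a, a + ε • d, a + (3 * ε) • d} : Set ℂ).ncard = 3 := by
  refine ncard_eq_three.mpr ⟨_, _, _, ?_, ?_, ?_, rfl⟩
  · simp [hd, hε]
  · simp [hd, hε]
  · intro h
    have h3 : ε = 3 * ε := smul_left_injective ℝ hd (add_left_cancel h)
    exact hε (by linarith)

end DrawingHull

theorem card_states_ge_general (a d : ℂ) (hd : ‖d‖ = 1) (φ Δ ε : ℝ)
    (hφ : φ ∈ Set.Ioc 0 (π / 3))
    (hε : 0 < ε) (hεΔ : 3 * ε ≤ Δ)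
    (k : ℕ) (hk : k = (dlocs a d φ Δ ε).ncard)
    (ℓ : ℕ) (hℓ : 4 ≤ ℓ) (hℓk : ℓ ≤ k - 1) :
    Nat.choose (k - 3) (ℓ - 3) ≤ (dstatesOfSize a d φ Δ ε ℓ).ncard ∧
      k - 3 ≤ Nat.choose (k - 3) (ℓ - 3) := by
  have hd0 : d ≠ 0 := norm_ne_zero_iff.mp (hd ▸ one_ne_zero)
  -- `ncard` is `0` on infinite sets, whereas `k ≥ 5`.
  have hL : (dlocs a d φ Δ ε).Finite := finite_of_ncard_ne_zero (by omega)
  set T : Set ℂ := {a, a + ε • d, a + (3 * ε) • d}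
  have hT : T ∈ dtriples a d Δ ε := triple_mem_dtriples hεΔ
  have hT3 : T.ncard = 3 := ncard_triple hd0 hε.ne'
  have hstates : (dstatesOfSize a d φ Δ ε ℓ).Finite :=
    hL.finite_subsets.subset fun _ hU => dstates_subset_powerset_dlocs hd hφ.1 hε.le hU.1
  refine ⟨?_, Nat.self_le_choose (by omega) (by omega)⟩
  rw [hk, ← hT3]
  refine choose_le_ncard_of_union_mem hL (subset_dlocs_of_mem_dtriples hd hφ.1 hε.le hT)
    hstates _ fun S hS hScard => ⟨⟨S, hS.trans sdiff_subset, T, hT, rfl⟩, ?_⟩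
  rw [ncard_union_eq (subset_sdiff.mp hS).2 (hL.subset (hS.trans sdiff_subset)), hScard, hT3]
  omega

/-- With `k := |L(ε)|`, for every `ℓ` with `4 ≤ ℓ ≤ k - 1`, the number of
`ε`-granular states of size `ℓ` is at least `C(k-3, ℓ-3)`, which is at least `k - 3`. -/
theorem card_states_ge (a d : ℂ) (hd : ‖d‖ = 1) (φ Δ ε : ℝ)
    (hφ : φ ∈ Set.Ioc 0 (π / 3)) (hΔ : Δ ∈ Set.Ioc (0 : ℝ) 1)
    (hε : 0 < ε) (hεΔ : 3 * ε ≤ Δ)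
    (k : ℕ) (hk : k = (dlocs a d φ Δ ε).ncard)
    (ℓ : ℕ) (hℓ : 4 ≤ ℓ) (hℓk : ℓ ≤ k - 1) :
    Nat.choose (k - 3) (ℓ - 3) ≤ (dstatesOfSize a d φ Δ ε ℓ).ncard ∧
      k - 3 ≤ Nat.choose (k - 3) (ℓ - 3) :=
  card_states_ge_general a d hd φ Δ ε hφ hε hεΔ k hk ℓ hℓ hℓk
end

section
/- Fix Δ ∈ (0, 1] and φ ∈ (0, π/3]. There exist constants c > 0 and ε₀ > 0 such that for every a ∈ ℝ², every unit vector d ∈ ℝ², and every ε ∈ (0, ε₀], the number of ε-granular locations satisfies |L(ε)| ≥ c · φ · Δ² / ε². -/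
/-!
Take `N = ⌊Δ / (8ε)⌋` and the grid points with indices `N ≤ i < 2N`, `0 ≤ j ≤ Nφ/4`. In the frame
`(d, I d)` such a point is `((1+2i)ε, 2jε)`: its slope is below `φ`, so its angle `arg ≤ tan arg`
is below `φ`, and its distance to `a` is at most `8Nε ≤ Δ`. Hence all of them are locations, and
there are about `N²φ/4 ≥ φΔ²/(1024 ε²)` of them once `ε ≤ Δ/16`.
-/

open Real Set

open Complex

lemma Complex.arg_lt_of_im_lt_mul_re {z : ℂ} {φ : ℝ} (hre : 0 < z.re) (him : 0 ≤ z.im)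
    (h : z.im < φ * z.re) : arg z < φ :=
  calc arg z ≤ Real.tan (arg z) :=
        Real.le_tan (arg_nonneg_iff.2 him) (arg_lt_pi_div_two_iff.2 (Or.inl hre))
    _ = z.im / z.re := tan_arg z
    _ < φ := (div_lt_iff₀ hre).2 h

lemma ccwAngle_mem_Ico {w z : ℂ} {φ : ℝ} (hre : 0 < (z / w).re) (him : 0 ≤ (z / w).im)
    (h : (z / w).im < φ * (z / w).re) : ccwAngle w z ∈ Ico 0 φ := by
  have harg : 0 ≤ (z / w).arg := arg_nonneg_iff.2 him
  rw [ccwAngle, toCCW, if_pos harg]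
  exact ⟨harg, arg_lt_of_im_lt_mul_re hre him h⟩

section Grid

variable {a d : ℂ} {φ Δ ε : ℝ}

noncomputable def gridPoint (a d : ℂ) (ε : ℝ) (p : ℕ × ℕ) : ℂ :=
  a + ((1 + 2 * (p.1 : ℝ)) * ε) • d + (2 * (p.2 : ℝ) * ε) • (I * d)

def gridOffset (ε : ℝ) (p : ℕ × ℕ) : ℂ := ⟨(1 + 2 * p.1) * ε, 2 * p.2 * ε⟩

lemma gridPoint_sub (a d : ℂ) (ε : ℝ) (p : ℕ × ℕ) :
    gridPoint a d ε p - a = gridOffset ε p * d := by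
  apply Complex.ext <;> simp [gridPoint, gridOffset] <;> ring

lemma dist_gridPoint (hd : ‖d‖ = 1) (p : ℕ × ℕ) :
    dist (gridPoint a d ε p) a = ‖gridOffset ε p‖ := by
  rw [dist_eq_norm, gridPoint_sub, norm_mul, hd, mul_one]

lemma gridOffset_injective (hε : ε ≠ 0) : Function.Injective (gridOffset ε) := by
  intro p q hpq
  have hre := congrArg re hpq
  have him := congrArg im hpq
  simp only [gridOffset, mul_left_inj' hε] at hre him
  exact Prod.ext (by exact_mod_cast (by linarith : (p.1 : ℝ) = q.1))
    (by exact_mod_cast (by linarith : (p.2 : ℝ) = q.2))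

lemma gridPoint_injective (hd : d ≠ 0) (hε : ε ≠ 0) : Function.Injective (gridPoint a d ε) := by
  intro p q hpq
  have h := congrArg (· - a) hpq
  simp only [gridPoint_sub] at h
  exact gridOffset_injective hε (mul_right_cancel₀ hd h)

lemma gridPoint_mem_dhull (hd : ‖d‖ = 1) (hε : 0 < ε) {p : ℕ × ℕ}
    (hangle : 2 * (p.2 : ℝ) < φ * (1 + 2 * p.1)) (hdist : (1 + 2 * p.1 + 2 * p.2) * ε ≤ Δ) :
    gridPoint a d ε p ∈ dhull a d φ Δ := by
  have hd0 : d ≠ 0 := norm_ne_zero_iff.1 (by simp [hd])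
  have hdiv : (gridPoint a d ε p - a) / d = gridOffset ε p := by
    rw [gridPoint_sub, mul_div_cancel_right₀ _ hd0]
  refine Or.inr ⟨?_, ?_⟩
  · rw [dist_gridPoint hd]
    refine (norm_le_abs_re_add_abs_im _).trans ?_
    simp only [gridOffset]
    rw [abs_of_pos (by positivity), abs_of_nonneg (by positivity)]
    linarith
  · apply ccwAngle_mem_Ico <;> simp only [hdiv, gridOffset]
    · positivity
    · positivity
    · nlinarith

lemma finite_dlocs (hd : ‖d‖ = 1) (hε : 0 < ε) : (dlocs a d φ Δ ε).Finite := by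
  set K := ⌊Δ / ε⌋₊
  refine ((Set.finite_Iic (K, K)).image (gridPoint a d ε)).insert a |>.subset ?_
  rintro x ⟨rfl | ⟨i, j, rfl⟩, hx⟩
  · exact Set.mem_insert _ _
  rcases hx with hx | ⟨hdist, -⟩
  · exact Or.inl hx
  refine Or.inr ⟨(i, j), ?_, rfl⟩
  change dist (gridPoint a d ε (i, j)) a ≤ Δ at hdist
  rw [dist_gridPoint hd] at hdist
  have hre := (re_le_norm (gridOffset ε (i, j))).trans hdist
  have him := (im_le_norm (gridOffset ε (i, j))).trans hdist
  simp only [gridOffset] at hre him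
  refine ⟨Nat.le_floor ?_, Nat.le_floor ?_⟩ <;> rw [le_div_iff₀ hε] <;> nlinarith

noncomputable def gridBox (N : ℕ) (φ : ℝ) : Finset (ℕ × ℕ) :=
  Finset.Ico N (2 * N) ×ˢ Finset.range (⌊N * φ / 4⌋₊ + 1)

lemma le_card_gridBox (N : ℕ) : (N : ℝ) ^ 2 * φ / 4 ≤ (gridBox N φ).card := by
  have hfloor : (N : ℝ) * φ / 4 ≤ ⌊N * φ / 4⌋₊ + 1 := (Nat.lt_floor_add_one _).le
  rw [gridBox, Finset.card_product, Nat.card_Ico, Finset.card_range, show 2 * N - N = N by omega]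
  push_cast
  nlinarith [N.cast_nonneg (α := ℝ)]

lemma gridPoint_mem_dlocs_of_mem_gridBox (hd : ‖d‖ = 1) (hε : 0 < ε) (hφ : φ ∈ Ioc 0 2)
    {N : ℕ} (hN : 8 * N * ε ≤ Δ) {p : ℕ × ℕ} (hp : p ∈ gridBox N φ) :
    gridPoint a d ε p ∈ dlocs a d φ Δ ε := by
  simp only [gridBox, Finset.mem_product, Finset.mem_Ico, Finset.mem_range,
    Nat.lt_succ_iff] at hp
  obtain ⟨⟨hNi, hi2N⟩, hj⟩ := hp
  have hNi' : (N : ℝ) ≤ p.1 := by exact_mod_cast hNi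
  have hi2N' : (p.1 : ℝ) + 1 ≤ 2 * N := by exact_mod_cast hi2N
  have hj' : (p.2 : ℝ) ≤ N * φ / 4 :=
    (Nat.cast_le.2 hj).trans (Nat.floor_le (by have := hφ.1; positivity))
  refine ⟨Or.inr ⟨p.1, p.2, rfl⟩, gridPoint_mem_dhull hd hε ?_ ?_⟩
  · nlinarith [hφ.1]
  · calc (1 + 2 * p.1 + 2 * p.2) * ε ≤ 8 * N * ε := by gcongr; nlinarith [hφ.2]
      _ ≤ Δ := hN

lemma card_gridBox_le_ncard_dlocs (hd : ‖d‖ = 1) (hε : 0 < ε) (hφ : φ ∈ Ioc 0 2)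
    {N : ℕ} (hN : 8 * N * ε ≤ Δ) : (gridBox N φ).card ≤ (dlocs a d φ Δ ε).ncard := by
  have hd0 : d ≠ 0 := norm_ne_zero_iff.1 (by simp [hd])
  rw [← Set.ncard_coe_finset]
  exact Set.ncard_le_ncard_of_injOn (gridPoint a d ε)
    (fun p hp => gridPoint_mem_dlocs_of_mem_gridBox hd hε hφ hN hp)
    (gridPoint_injective hd0 hε.ne').injOn (finite_dlocs hd hε)

end Grid

/-- For fixed `Δ ∈ (0,1]` and `φ ∈ (0, π/3]`, there are constants
`c > 0` and `ε₀ > 0` such that for every anchor, unit direction and `ε ∈ (0, ε₀]`,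
the number of `ε`-granular locations is at least `c · φ · Δ² / ε²`. -/
theorem card_locs_lower_bound (Δ φ : ℝ)
    (hΔ : Δ ∈ Set.Ioc (0 : ℝ) 1) (hφ : φ ∈ Set.Ioc 0 (π / 3)) :
    ∃ c > (0 : ℝ), ∃ ε₀ > (0 : ℝ), ∀ a d : ℂ, ‖d‖ = 1 → ∀ ε : ℝ, 0 < ε → ε ≤ ε₀ →
      c * φ * Δ ^ 2 / ε ^ 2 ≤ ((dlocs a d φ Δ ε).ncard : ℝ) := by
  refine ⟨1 / 1024, by norm_num, Δ / 16, by linarith [hΔ.1], fun a d hd ε hε hεΔ => ?_⟩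
  have hφ2 : φ ∈ Ioc 0 2 := ⟨hφ.1, by linarith [hφ.2, pi_le_four]⟩
  set N := ⌊Δ / (8 * ε)⌋₊
  have hN : 8 * N * ε ≤ Δ := by
    have := Nat.floor_le (div_nonneg hΔ.1.le (by positivity) : 0 ≤ Δ / (8 * ε))
    rw [le_div_iff₀ (by positivity)] at this
    linarith
  -- `Δ / (8ε) ≥ 2`, so rounding it down loses at most half of it
  have hN' : Δ / (16 * ε) ≤ N := by
    have h2 : 2 ≤ Δ / (8 * ε) := by rw [le_div_iff₀ (by positivity)]; linarith
    have := Nat.sub_one_lt_floor (Δ / (8 * ε))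
    rw [show Δ / (16 * ε) = Δ / (8 * ε) / 2 by field_simp; ring]
    linarith
  calc 1 / 1024 * φ * Δ ^ 2 / ε ^ 2 = (Δ / (16 * ε)) ^ 2 * φ / 4 := by field_simp; ring
    _ ≤ (N : ℝ) ^ 2 * φ / 4 := by have := hφ.1; gcongr; exact div_nonneg hΔ.1.le (by positivity)
    _ ≤ (gridBox N φ).card := le_card_gridBox N
    _ ≤ (dlocs a d φ Δ ε).ncard := by exact_mod_cast card_gridBox_le_ncard_dlocs hd hε hφ2 hN
end

section
/- Let a ∈ ℝ², let d ∈ ℝ² be a unit vector, let φ ∈ (0, π/3], Δ ∈ (0, 1], and 0 < ε ≤ Δ. Then for every ε-granular state S ∈ A(ε), the pair {a, a + ε·d} is the unique two-element subset of S whose two points are at distance exactly ε; every other pair of distinct points of S is at distance at least 2ε. -/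
open Real Set

/-!
Read a state in the frame with origin `a`, orthonormal axes `d, I * d` and unit `ε`, i.e. through
`z ↦ a + ε z d`, which scales distances by exactly `ε`. Every point then has coordinates `0` or
`(1 + 2m) + 2n i` with `m n : ℕ`. Two distinct grid coordinates differ by a nonzero vector with
even entries, hence by at least `2`, and `|(1 + 2m) + 2n i| ≥ 2` unless `m = n = 0`. So the only
pair of coordinates closer than `2` is `{0, 1}`, the coordinates of `{a, a + ε d}`.
-/

open Complex

def gridCoord (m n : ℕ) : ℂ := (1 + 2 * m : ℂ) + 2 * n * I

def stateCoords : Set ℂ := insert 0 (range (Function.uncurry gridCoord))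

def frameMap (a d : ℂ) (ε : ℝ) (z : ℂ) : ℂ := a + ε * z * d

lemma gridCoord_re (m n : ℕ) : (gridCoord m n).re = 1 + 2 * m := by
  simp [gridCoord]

lemma gridCoord_im (m n : ℕ) : (gridCoord m n).im = 2 * n := by
  simp [gridCoord]

lemma gridCoord_zero_zero : gridCoord 0 0 = 1 := by
  simp [gridCoord]

lemma one_le_sq_sub_of_ne {m n : ℕ} (h : m ≠ n) : 1 ≤ ((m : ℝ) - n) ^ 2 := by
  have : (1 : ℤ) ≤ |(m : ℤ) - n| := Int.one_le_abs (sub_ne_zero.mpr (by exact_mod_cast h))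
  exact_mod_cast one_le_sq_iff_one_le_abs _ |>.mpr this

lemma two_le_norm_of_four_le_normSq {z : ℂ} (h : 4 ≤ normSq z) : 2 ≤ ‖z‖ := by
  nlinarith [normSq_eq_norm_sq z, norm_nonneg z]

lemma two_le_norm_gridCoord {m n : ℕ} (h : (m, n) ≠ (0, 0)) : 2 ≤ ‖gridCoord m n‖ := by
  apply two_le_norm_of_four_le_normSq
  rw [normSq_apply, gridCoord_re, gridCoord_im]
  rcases Nat.eq_zero_or_pos m with rfl | hm
  · have : (1 : ℝ) ≤ n := by exact_mod_cast Nat.one_le_iff_ne_zero.mpr (by grind)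
    nlinarith
  · have : (1 : ℝ) ≤ m := by exact_mod_cast hm
    nlinarith

lemma two_le_norm_gridCoord_sub {m n m' n' : ℕ} (h : gridCoord m n ≠ gridCoord m' n') :
    2 ≤ ‖gridCoord m n - gridCoord m' n'‖ := by
  apply two_le_norm_of_four_le_normSq
  simp only [normSq_apply, sub_re, sub_im, gridCoord_re, gridCoord_im]
  have hne : m ≠ m' ∨ n ≠ n' := by
    by_contra! h'
    exact h (by rw [h'.1, h'.2])
  rcases hne with hm | hn
  · nlinarith [one_le_sq_sub_of_ne hm]
  · nlinarith [one_le_sq_sub_of_ne hn]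

lemma pair_eq_zero_one_or_two_le_norm_sub {z w : ℂ} (hz : z ∈ stateCoords) (hw : w ∈ stateCoords)
    (hzw : z ≠ w) : ({z, w} : Set ℂ) = {0, 1} ∨ 2 ≤ ‖z - w‖ := by
  rcases hz with rfl | ⟨⟨m, n⟩, rfl⟩ <;> rcases hw with rfl | ⟨⟨m', n'⟩, rfl⟩
  · exact absurd rfl hzw
  · by_cases h : (m', n') = (0, 0)
    · rw [h, Function.uncurry_apply_pair, gridCoord_zero_zero]
      exact Or.inl rfl
    · rw [zero_sub, norm_neg]
      exact Or.inr (two_le_norm_gridCoord h)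
  · by_cases h : (m, n) = (0, 0)
    · rw [h, Function.uncurry_apply_pair, gridCoord_zero_zero, pair_comm]
      exact Or.inl rfl
    · rw [sub_zero]
      exact Or.inr (two_le_norm_gridCoord h)
  · exact Or.inr (two_le_norm_gridCoord_sub hzw)

section Frame

variable {a d : ℂ} {ε : ℝ}

lemma dist_frameMap (hd : ‖d‖ = 1) (hε : 0 ≤ ε) (z w : ℂ) :
    dist (frameMap a d ε z) (frameMap a d ε w) = ε * ‖z - w‖ := by
  rw [dist_eq_norm, frameMap, frameMap,
    show a + ε * z * d - (a + ε * w * d) = ε * (z - w) * d by ring,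
    norm_mul, norm_mul, hd, mul_one, norm_real, Real.norm_of_nonneg hε]

lemma frameMap_zero : frameMap a d ε 0 = a := by
  simp [frameMap]

lemma frameMap_one : frameMap a d ε 1 = a + ε • d := by
  simp [frameMap, real_smul]

lemma frameMap_gridCoord (m n : ℕ) : frameMap a d ε (gridCoord m n) =
    a + ((1 + 2 * (m : ℝ)) * ε) • d + (2 * (n : ℝ) * ε) • (I * d) := by
  simp only [frameMap, gridCoord, real_smul]
  push_cast
  ring

variable {φ Δ : ℝ} {S : Set ℂ}

lemma pair_subset_of_mem_dstates (hS : S ∈ dstates a d φ Δ ε) : ({a, a + ε • d} : Set ℂ) ⊆ S := by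
  obtain ⟨L, -, T, ⟨i, -, -, rfl⟩, rfl⟩ := hS
  exact subset_union_of_subset_right
    (insert_subset_insert (singleton_subset_iff.mpr (mem_insert _ _))) L

lemma subset_frameMap_image_of_mem_dstates (hS : S ∈ dstates a d φ Δ ε) :
    S ⊆ frameMap a d ε '' stateCoords := by
  have h0 : a ∈ frameMap a d ε '' stateCoords := ⟨0, mem_insert _ _, frameMap_zero⟩
  have hgrid (m n : ℕ) : a + ((1 + 2 * (m : ℝ)) * ε) • d + (2 * (n : ℝ) * ε) • (I * d) ∈
      frameMap a d ε '' stateCoords :=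
    ⟨gridCoord m n, mem_insert_of_mem _ ⟨(m, n), rfl⟩, frameMap_gridCoord m n⟩
  obtain ⟨L, hL, T, ⟨i, -, -, rfl⟩, rfl⟩ := hS
  rintro x (hx | rfl | rfl | rfl)
  · rcases (hL hx).1 with rfl | ⟨m, n, rfl⟩
    · exact h0
    · exact hgrid m n
  · exact h0
  · simpa using hgrid 0 0
  · simpa using hgrid i 0

lemma pair_eq_or_two_mul_le_dist (hd : ‖d‖ = 1) (hε : 0 ≤ ε) (hS : S ∈ dstates a d φ Δ ε)
    {x y : ℂ} (hx : x ∈ S) (hy : y ∈ S) (hxy : x ≠ y) :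
    ({x, y} : Set ℂ) = {a, a + ε • d} ∨ 2 * ε ≤ dist x y := by
  obtain ⟨z, hz, rfl⟩ := subset_frameMap_image_of_mem_dstates hS hx
  obtain ⟨w, hw, rfl⟩ := subset_frameMap_image_of_mem_dstates hS hy
  rcases pair_eq_zero_one_or_two_le_norm_sub hz hw (ne_of_apply_ne _ hxy) with h | h
  · left
    rw [← image_pair, h, image_pair, frameMap_zero, frameMap_one]
  · right
    rw [dist_frameMap hd hε]
    nlinarith

end Frame

theorem defining_pair_unique_general (a d : ℂ) (hd : ‖d‖ = 1) (φ Δ ε : ℝ)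
    (hε : 0 < ε) :
    ∀ S ∈ dstates a d φ Δ ε,
      ({a, a + ε • d} : Set ℂ) ⊆ S ∧
      dist a (a + ε • d) = ε ∧
      (∀ x ∈ S, ∀ y ∈ S, x ≠ y → dist x y = ε → ({x, y} : Set ℂ) = {a, a + ε • d}) ∧
      (∀ x ∈ S, ∀ y ∈ S, x ≠ y → ({x, y} : Set ℂ) ≠ {a, a + ε • d} → 2 * ε ≤ dist x y) := by
  intro S hS
  have hdichotomy {x y : ℂ} (hx : x ∈ S) (hy : y ∈ S) (hxy : x ≠ y) :=
    pair_eq_or_two_mul_le_dist hd hε.le hS hx hy hxy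
  refine ⟨pair_subset_of_mem_dstates hS, ?_, fun x hx y hy hxy hdist => ?_,
    fun x hx y hy hxy hne => (hdichotomy hx hy hxy).resolve_left hne⟩
  · rw [dist_self_add_right, norm_smul, hd, mul_one, Real.norm_of_nonneg hε.le]
  · exact (hdichotomy hx hy hxy).resolve_right (by rw [hdist]; linarith)

/-- For `0 < ε ≤ Δ` and any `ε`-granular state `S ∈ A(ε)`, the pair
`{a, a + ε•d}` is contained in `S`, its two points are at distance exactly `ε`, it is the
unique two-element subset of `S` at distance `ε`, and every other pair of distinct points
of `S` is at distance at least `2ε`. -/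
theorem defining_pair_unique (a d : ℂ) (hd : ‖d‖ = 1) (φ Δ ε : ℝ)
    (hφ : φ ∈ Set.Ioc 0 (π / 3)) (hΔ : Δ ∈ Set.Ioc (0 : ℝ) 1)
    (hε : 0 < ε) (hεΔ : ε ≤ Δ) :
    ∀ S ∈ dstates a d φ Δ ε,
      ({a, a + ε • d} : Set ℂ) ⊆ S ∧
      dist a (a + ε • d) = ε ∧
      (∀ x ∈ S, ∀ y ∈ S, x ≠ y → dist x y = ε → ({x, y} : Set ℂ) = {a, a + ε • d}) ∧
      (∀ x ∈ S, ∀ y ∈ S, x ≠ y → ({x, y} : Set ℂ) ≠ {a, a + ε • d} → 2 * ε ≤ dist x y) :=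
  defining_pair_unique_general a d hd φ Δ ε hε
end

section
/- Let s ≥ 1 be an integer, let Δ ∈ (0, 1/6], let φ = min(2π/s, π/3), and let a = 2Δ·(cos(π/s), sin(π/s)). Then the drawing hull H(a, (1,0), φ, Δ) is contained in the first cone C^(1). -/
open Real Set

/-- The `i`-th cone `C^(i)` (for symmetricity `s`): nonzero points whose counterclockwise
angle from `(1, 0)` lies in `[(i-1)·2π/s, i·2π/s)`. -/
noncomputable def dcone (s i : ℕ) : Set ℂ :=
  {p : ℂ | p ≠ 0 ∧
    ccwAngle 1 p ∈ Set.Ico (((i : ℝ) - 1) * (2 * Real.pi / s)) ((i : ℝ) * (2 * Real.pi / s))}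

/-! Write a point of the hull as `x = a + v` with `‖v‖ ≤ Δ` and `arg v ∈ [0, φ) ⊆ [0, 2π/s)`.
For `s ≥ 2` the anchor `a` has argument `π/s`, strictly inside `[0, 2π/s)`, and a sector of
aperture at most `π` is closed under addition, so `arg x ∈ (0, 2π/s)`. For `s = 1` the first cone
is all of `ℂ ∖ {0}`, and `x ≠ 0` because `‖a‖ = 2Δ > Δ`. -/

lemma two_mul_pi_div_le_pi {s : ℕ} (hs : 2 ≤ s) : 2 * π / s ≤ π := by
  have hs' : (2 : ℝ) ≤ s := by exact_mod_cast hs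
  rw [div_le_iff₀ (by linarith)]
  nlinarith [pi_pos]

lemma toCCW_mem_Ico_iff {θ φ : ℝ} (hθ : -π < θ) (hφ : φ ≤ π) :
    toCCW θ ∈ Ico 0 φ ↔ θ ∈ Ico 0 φ := by
  unfold toCCW
  split_ifs with h
  · rfl
  · simp only [mem_Ico, not_le.mpr (lt_of_not_ge h), false_and, iff_false, not_and, not_lt]
    intro _
    linarith

lemma toCCW_arg_mem_Ico (z : ℂ) : toCCW z.arg ∈ Ico 0 (2 * π) := by
  unfold toCCW
  split_ifs with h
  · exact ⟨h, by linarith [z.arg_le_pi, pi_pos]⟩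
  · constructor <;> linarith [z.neg_pi_lt_arg]

lemma ccwAngle_one (z : ℂ) : ccwAngle 1 z = toCCW z.arg := by
  simp [ccwAngle]

lemma dhull_one_eq {a : ℂ} {φ Δ : ℝ} (hΔ : 0 ≤ Δ) (hφ0 : 0 < φ) (hφ : φ ≤ π) :
    dhull a 1 φ Δ = {x | ‖x - a‖ ≤ Δ ∧ (x - a).arg ∈ Ico 0 φ} := by
  ext x
  simp only [dhull, ccwAngle_one, toCCW_mem_Ico_iff (x - a).neg_pi_lt_arg hφ, dist_eq_norm,
    mem_union, mem_singleton_iff, mem_ofPred_eq]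
  constructor
  · rintro (rfl | h)
    · simp [hΔ, hφ0]
    · exact h
  · exact Or.inr

lemma dcone_one_one : dcone 1 1 = {0}ᶜ := by
  ext p
  simp only [dcone, Nat.cast_one, sub_self, zero_mul, one_mul, div_one, ccwAngle_one,
    mem_ofPred_eq, mem_compl_singleton_iff]
  exact and_iff_left (toCCW_arg_mem_Ico p)

lemma mem_dcone_one_iff {s : ℕ} (hs : 2 ≤ s) {p : ℂ} :
    p ∈ dcone s 1 ↔ p ≠ 0 ∧ p.arg ∈ Ico 0 (2 * π / s) := by
  simp only [dcone, Nat.cast_one, sub_self, zero_mul, one_mul, ccwAngle_one,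
    toCCW_mem_Ico_iff p.neg_pi_lt_arg (two_mul_pi_div_le_pi hs), mem_ofPred_eq]

namespace Complex

lemma mk_mul_cos_mul_sin (r θ : ℝ) :
    (⟨r * Real.cos θ, r * Real.sin θ⟩ : ℂ) = r * (Complex.cos θ + Complex.sin θ * I) := by
  apply Complex.ext <;> simp [cos_ofReal_re, sin_ofReal_re]

lemma norm_mk_mul_cos_mul_sin (r θ : ℝ) :
    ‖(⟨r * Real.cos θ, r * Real.sin θ⟩ : ℂ)‖ = |r| := by
  rw [mk_mul_cos_mul_sin, norm_mul, norm_real, Real.norm_eq_abs, norm_cos_add_sin_mul_I, mul_one]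

lemma arg_mk_mul_cos_mul_sin {r θ : ℝ} (hr : 0 < r) (hθ : θ ∈ Ioc (-π) π) :
    (⟨r * Real.cos θ, r * Real.sin θ⟩ : ℂ).arg = θ := by
  rw [mk_mul_cos_mul_sin, arg_real_mul _ hr, arg_cos_add_sin_mul_I hθ]

lemma sin_mul_re_sub_cos_mul_im (z : ℂ) (β : ℝ) :
    Real.sin β * z.re - Real.cos β * z.im = ‖z‖ * Real.sin (β - z.arg) := by
  rw [← norm_mul_cos_arg, ← norm_mul_sin_arg, Real.sin_sub]
  ring

lemma arg_lt_of_sin_mul_re_sub_cos_mul_im_pos {z : ℂ} {β : ℝ} (hβ : 0 ≤ β)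
    (h : 0 < Real.sin β * z.re - Real.cos β * z.im) : z.arg < β := by
  by_contra! hle
  rw [sin_mul_re_sub_cos_mul_im] at h
  have : Real.sin (β - z.arg) ≤ 0 :=
    Real.sin_nonpos_of_nonpos_of_neg_pi_le (by linarith) (by linarith [arg_le_pi z])
  nlinarith [norm_nonneg z]

lemma arg_add_mem_Ioo {u w : ℂ} {β : ℝ} (hβ : β ≤ π) (hu : u.arg ∈ Ioo 0 β)
    (hw : w.arg ∈ Ico 0 β) : (u + w).arg ∈ Ioo 0 β := by
  have hu0 : u ≠ 0 := by rintro rfl; simp at hu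
  have hu_im : 0 < u.im := by
    rw [← norm_mul_sin_arg]
    exact mul_pos (norm_pos_iff.mpr hu0) (Real.sin_pos_of_pos_of_lt_pi hu.1 (by linarith [hu.2]))
  have hsum_im : 0 < (u + w).im := by
    rw [add_im]
    linarith [arg_nonneg_iff.mp hw.1]
  -- `z ↦ sin β * z.re - cos β * z.im` is additive and, on the upper half plane, positive exactly
  -- where `arg z < β`.
  have hKu : 0 < Real.sin β * u.re - Real.cos β * u.im := by
    rw [sin_mul_re_sub_cos_mul_im]
    exact mul_pos (norm_pos_iff.mpr hu0)
      (Real.sin_pos_of_pos_of_lt_pi (by linarith [hu.2]) (by linarith [hu.1]))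
  have hKw : 0 ≤ Real.sin β * w.re - Real.cos β * w.im := by
    rw [sin_mul_re_sub_cos_mul_im]
    exact mul_nonneg (norm_nonneg w)
      (Real.sin_nonneg_of_nonneg_of_le_pi (by linarith [hw.2]) (by linarith [hw.1]))
  refine ⟨(arg_nonneg_iff.mpr hsum_im.le).lt_of_ne fun h ↦ ?_, ?_⟩
  · exact hsum_im.ne' (arg_eq_zero_iff.mp h.symm).2
  · apply arg_lt_of_sin_mul_re_sub_cos_mul_im_pos (hu.1.trans hu.2).le
    simp only [add_re, add_im]
    linarith

end Complex

/-- For `s ≥ 1`, `Δ ∈ (0, 1/6]`, `φ = min(2π/s, π/3)` and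
`a = 2Δ·(cos(π/s), sin(π/s))`, the drawing hull `H(a, (1,0), φ, Δ)` is contained in the
first cone `C^(1)`. -/
theorem initial_hull_in_first_cone (s : ℕ) (hs : 1 ≤ s) (Δ : ℝ)
    (hΔ : Δ ∈ Set.Ioc (0 : ℝ) (1 / 6))
    (φ : ℝ) (hφ : φ = min (2 * π / s) (π / 3))
    (a : ℂ) (ha : a = (⟨2 * Δ * Real.cos (π / s), 2 * Δ * Real.sin (π / s)⟩ : ℂ)) :
    dhull a 1 φ Δ ⊆ dcone s 1 := by
  have hΔ0 : 0 < Δ := hΔ.1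
  have hs0 : (0 : ℝ) < s := by exact_mod_cast hs
  have hφβ : φ ≤ 2 * π / s := hφ ▸ min_le_left _ _
  have hφπ : φ ≤ π := hφ ▸ (min_le_right _ _).trans (by linarith [pi_pos])
  have hφ0 : 0 < φ := hφ ▸ lt_min (by positivity) (by positivity)
  rw [dhull_one_eq hΔ0.le hφ0 hφπ]
  rintro x ⟨hxa, hv⟩
  have ha_norm : ‖a‖ = 2 * Δ := by
    rw [ha, Complex.norm_mk_mul_cos_mul_sin, abs_of_pos (by positivity)]
  have hx0 : x ≠ 0 := by
    rintro rfl
    rw [zero_sub, norm_neg] at hxa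
    linarith
  obtain rfl | hs2 : s = 1 ∨ 2 ≤ s := by omega
  · simpa [dcone_one_one] using hx0
  have hβπ := two_mul_pi_div_le_pi hs2
  have hθ0 : 0 < π / s := by positivity
  have hθβ : π / s < 2 * π / s := by gcongr; linarith [pi_pos]
  have ha_arg : a.arg ∈ Ioo 0 (2 * π / s) := by
    rw [ha, Complex.arg_mk_mul_cos_mul_sin (by positivity) ⟨by linarith, by linarith⟩]
    exact ⟨hθ0, hθβ⟩
  have hx_arg := Complex.arg_add_mem_Ioo hβπ ha_arg ⟨hv.1, hv.2.trans_le hφβ⟩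
  rw [add_sub_cancel] at hx_arg
  exact (mem_dcone_one_iff hs2).mpr ⟨hx0, Ioo_subset_Ico_self hx_arg⟩
end
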